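/- arXiv:2202.13107 — 6 statements merged into one kernel-verified Lean document; each statement's English description precedes it below -/
import Mathlib

section
/- Let R > 0 be a real number and y a complex number with |y| < R. Then | |R + y| − R − Re(y) | ≤ |y|² / (R − |y|). -/
/-! Writing `z = R + y`, the defect `‖z‖ - Re z` is nonnegative and equals `(Im z)² / (‖z‖ + Re z)`;
the numerator is at most `‖y‖²` and the denominator at least `2 Re z ≥ 2 (R - ‖y‖)`. -/

namespace Complex

theorem norm_sub_re_mul_norm_add_re (z : ℂ) : (‖z‖ - z.re) * (‖z‖ + z.re) = z.im ^ 2 := by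
  rw [← sq_norm_sub_sq_re]
  ring

theorem norm_sub_re_le (z : ℂ) (hz : 0 < z.re) : ‖z‖ - z.re ≤ z.im ^ 2 / (2 * z.re) := by
  have hdefect : 0 ≤ ‖z‖ - z.re := sub_nonneg.mpr (re_le_norm z)
  rw [le_div_iff₀ (by positivity), ← norm_sub_re_mul_norm_add_re]
  exact mul_le_mul_of_nonneg_left (by linarith [re_le_norm z]) hdefect

end Complex

open Complex in
theorem stmt_0_general (R : ℝ) (y : ℂ) (hy : ‖y‖ < R) :
    |‖(R : ℂ) + y‖ - R - y.re| ≤ (‖y‖) ^ 2 / (R - ‖y‖) := by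
  set z : ℂ := R + y with hz
  have hre : z.re = R + y.re := by simp [hz]
  have him : z.im = y.im := by simp [hz]
  have hgap : 0 < R - ‖y‖ := sub_pos.mpr hy
  have hre_ge : R - ‖y‖ ≤ z.re := by linarith [(abs_le.mp (abs_re_le_norm y)).1]
  have him_sq : z.im ^ 2 ≤ ‖y‖ ^ 2 := by
    rw [him]
    exact sq_le_sq' (abs_le.mp (abs_im_le_norm y)).1 (im_le_norm y)
  rw [sub_sub, ← hre, abs_of_nonneg (sub_nonneg.mpr (re_le_norm z))]
  calc ‖z‖ - z.re ≤ z.im ^ 2 / (2 * z.re) := norm_sub_re_le z (by linarith)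
    _ ≤ ‖y‖ ^ 2 / (R - ‖y‖) := div_le_div₀ (by positivity) him_sq hgap (by linarith)

theorem stmt_0 (R : ℝ) (hR : 0 < R) (y : ℂ) (hy : ‖y‖ < R) :
    |‖(R : ℂ) + y‖ - R - y.re| ≤ (‖y‖) ^ 2 / (R - ‖y‖) :=
  stmt_0_general R y hy
end

section
/- Let T be the piecewise rotation with T(z) = e^{iα}(z − C_j) + C_j for z ∈ P_j, and set N = 2|sin(α/2)| max(|C₀|,|C₁|). For any z = R e^{iθ} with R > N, writing j for the index with z ∈ P_j and g(θ) = −2|C_j| sin(α/2) sin(θ + α/2 − c_j) (where C_j = |C_j| e^{i c_j}), one has | |T(z)| − |z| − g(θ) | ≤ N² / (|z| − N). -/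
/-!
On `P j` the map is `T z = w + d` with `w = e^{iα} z` of modulus `R` and the displacement
`d = (1 - e^{iα}) C j` of length `2 |sin (α/2)| ‖C j‖ ≤ N`. The first-order expansion
`‖w + d‖ ≈ ‖w‖ + ⟪d, w⟫ / ‖w‖` has error at most `‖d‖² / (‖w‖ - ‖d‖)`, and `⟪d, w⟫ / ‖w‖` is
the drift `g θ`, by the difference formula `cos (x + α) - cos x = -2 sin (α/2) sin (x + α/2)`.
-/

open Complex ComplexConjugate

theorem abs_norm_add_sub_norm_sub_inner_div_le {F : Type*} [NormedAddCommGroup F]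
    [InnerProductSpace ℝ F] {w d : F} {N : ℝ} (hd : ‖d‖ ≤ N) (hN : N < ‖w‖) :
    |‖w + d‖ - ‖w‖ - inner ℝ d w / ‖w‖| ≤ N ^ 2 / (‖w‖ - N) := by
  set R := ‖w‖
  set g := inner ℝ d w / R
  have hR : 0 < R := (norm_nonneg d).trans hd |>.trans_lt hN
  have hg : |g| ≤ ‖d‖ := by
    rw [abs_div, abs_of_pos hR, div_le_iff₀ hR]
    exact abs_real_inner_le_norm d w
  have hsq : ‖w + d‖ ^ 2 = (R + g) ^ 2 + (‖d‖ ^ 2 - g ^ 2) := by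
    have hRg : R * g = inner ℝ d w := mul_div_cancel₀ _ hR.ne'
    rw [norm_add_sq_real, real_inner_comm, ← hRg]
    ring
  have hg_sq : g ^ 2 ≤ ‖d‖ ^ 2 := sq_le_sq' (abs_le.mp hg).1 (abs_le.mp hg).2
  have hlow : R - N ≤ ‖w + d‖ := by
    have h := norm_sub_norm_le w (-d)
    rw [sub_neg_eq_add, norm_neg] at h
    linarith
  have hB : R - N ≤ R + g := by linarith [neg_abs_le g]
  have hAB : R + g ≤ ‖w + d‖ := by nlinarith
  rw [show ‖w + d‖ - R - g = ‖w + d‖ - (R + g) by ring, abs_of_nonneg (by linarith),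
    le_div_iff₀ (by linarith)]
  nlinarith [norm_nonneg d]

theorem re_exp_mul_I_sub_one_mul_exp_mul_I (α x : ℝ) :
    ((exp (α * I) - 1) * exp (x * I)).re = -2 * Real.sin (α / 2) * Real.sin (x + α / 2) := by
  rw [sub_one_mul, ← exp_add, ← add_mul, ← ofReal_add, sub_re, exp_ofReal_mul_I_re,
    exp_ofReal_mul_I_re, Real.cos_sub_cos]
  ring_nf

theorem norm_one_sub_exp_mul_I (α : ℝ) : ‖1 - exp (α * I)‖ = 2 * |Real.sin (α / 2)| := by
  rw [norm_sub_rev, mul_comm, norm_exp_I_mul_ofReal_sub_one, norm_mul, Real.norm_ofNat,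
    Real.norm_eq_abs]

theorem real_inner_one_sub_exp_mul_exp_mul_polar (α R θ : ℝ) (C : ℂ) :
    inner ℝ ((1 - exp (α * I)) * C) (exp (α * I) * (R * exp (θ * I))) =
      R * (-2 * ‖C‖ * Real.sin (α / 2) * Real.sin (θ + α / 2 - arg C)) := by
  have hconj : conj (exp (α * I)) * exp (α * I) = 1 := by
    rw [← exp_conj, ← exp_add]; simp
  have hpolar : R * exp (θ * I) * conj C = ((R * ‖C‖ : ℝ) : ℂ) * exp ((θ - arg C : ℝ) * I) := by
    conv_lhs => rw [← norm_mul_exp_arg_mul_I C]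
    rw [map_mul, conj_ofReal, ← exp_conj]
    push_cast
    rw [sub_mul, sub_eq_add_neg, exp_add]
    simp only [map_mul, conj_ofReal, conj_I, mul_neg]
    ring
  calc inner ℝ ((1 - exp (α * I)) * C) (exp (α * I) * (R * exp (θ * I)))
      = ((exp (α * I) - 1) * (R * exp (θ * I) * conj C)).re := by
        rw [Complex.inner, map_mul, map_sub, map_one]
        congr 1
        linear_combination -(R * exp (θ * I) * conj C) * hconj
    _ = R * (-2 * ‖C‖ * Real.sin (α / 2) * Real.sin (θ + α / 2 - arg C)) := by
        rw [hpolar, mul_left_comm, re_ofReal_mul, re_exp_mul_I_sub_one_mul_exp_mul_I]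
        ring_nf

theorem stmt_5_general (α : ℝ) (C : Fin 2 → ℂ) (P : Fin 2 → Set ℂ) (T : ℂ → ℂ)
    (hT : ∀ (j : Fin 2), ∀ z ∈ P j, T z = Complex.exp (α * Complex.I) * (z - C j) + C j)
    (N : ℝ) (hN : N = 2 * |Real.sin (α / 2)| * max ‖C 0‖ ‖C 1‖)
    (R θ : ℝ) (hR : N < R) (z : ℂ) (hz : z = (R : ℂ) * Complex.exp (θ * Complex.I))
    (j : Fin 2) (hj : z ∈ P j) :
    |‖T z‖ - ‖z‖ -
        (-2 * ‖C j‖ * Real.sin (α / 2) *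
          Real.sin (θ + α / 2 - Complex.arg (C j)))| ≤
      N ^ 2 / (‖z‖ - N) := by
  have hN0 : 0 ≤ N := by rw [hN]; positivity
  have hz_norm : ‖z‖ = R := by
    rw [hz, norm_mul, norm_exp_ofReal_mul_I, mul_one, norm_real, Real.norm_of_nonneg (by linarith)]
  have hrot : ‖exp (α * I) * z‖ = ‖z‖ := by rw [norm_mul, norm_exp_ofReal_mul_I, one_mul]
  have hTz : T z = exp (α * I) * z + (1 - exp (α * I)) * C j := by rw [hT j z hj]; ring
  have hC : ‖C j‖ ≤ max ‖C 0‖ ‖C 1‖ := by fin_cases j <;> simp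
  have hd : ‖(1 - exp (α * I)) * C j‖ ≤ N := by
    rw [norm_mul, norm_one_sub_exp_mul_I, hN]; gcongr
  have hdrift : inner ℝ ((1 - exp (α * I)) * C j) (exp (α * I) * z) =
      R * (-2 * ‖C j‖ * Real.sin (α / 2) * Real.sin (θ + α / 2 - arg (C j))) := by
    rw [hz]; exact real_inner_one_sub_exp_mul_exp_mul_polar α R θ (C j)
  rw [hz_norm]
  have hexpansion := abs_norm_add_sub_norm_sub_inner_div_le hd (by rwa [hrot, hz_norm])
  rwa [← hTz, hrot, hdrift, hz_norm, mul_div_cancel_left₀ _ (by linarith)] at hexpansion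

theorem stmt_5 (α : ℝ) (C : Fin 2 → ℂ) (P : Fin 2 → Set ℂ) (T : ℂ → ℂ)
    (hdisj : Disjoint (P 0) (P 1)) (hcover : P 0 ∪ P 1 = Set.univ)
    (hT : ∀ (j : Fin 2), ∀ z ∈ P j, T z = Complex.exp (α * Complex.I) * (z - C j) + C j)
    (N : ℝ) (hN : N = 2 * |Real.sin (α / 2)| * max ‖C 0‖ ‖C 1‖)
    (R θ : ℝ) (hR : N < R) (z : ℂ) (hz : z = (R : ℂ) * Complex.exp (θ * Complex.I))
    (j : Fin 2) (hj : z ∈ P j) :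
    |‖T z‖ - ‖z‖ -
        (-2 * ‖C j‖ * Real.sin (α / 2) *
          Real.sin (θ + α / 2 - Complex.arg (C j)))| ≤
      N ^ 2 / (‖z‖ - N) :=
  stmt_5_general α C P T hT N hN R θ hR z hz j hj
end

section
/- Let T(z) = e^{iα}(z − C_j) + C_j for z ∈ P_j with N = 2|sin(α/2)| max(|C₀|,|C₁|). For z ∈ ℂ with |z| > N and z ≠ 0, T(z) ≠ 0, the arguments θ = arg z and θ₁ = arg T(z) satisfy the angular estimate: the distance on the circle between θ₁ and θ + α is at most N / (|z| − N). -/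
/-!
On the piece `P j`, `T z = u + c` with `u = e^{iα} z` and `c = (1 - e^{iα}) C j`, where
`arg u = arg z + α`, `‖u‖ = ‖z‖` and `‖c‖ = 2 |sin (α/2)| ‖C j‖ ≤ N`. Writing `u + c = u (1 + c/u)`,
the angle in question is `arg (1 + w)` with `‖w‖ = ‖c‖ / ‖z‖ < 1`, and for `‖w‖ < 1`
we have `|arg (1 + w)| ≤ |tan (arg (1 + w))| = |Im w| / (1 + Re w) ≤ ‖w‖ / (1 - ‖w‖)`.
-/

open Complex

theorem Real.abs_le_abs_tan {x : ℝ} (hx : |x| < Real.pi / 2) : |x| ≤ |Real.tan x| := by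
  rcases le_total 0 x with h | h
  · rw [abs_of_nonneg h] at hx ⊢
    exact (Real.le_tan h hx).trans (le_abs_self _)
  · rw [abs_of_nonpos h] at hx ⊢
    calc -x ≤ Real.tan (-x) := Real.le_tan (neg_nonneg.2 h) hx
      _ = -Real.tan x := Real.tan_neg x
      _ ≤ |Real.tan x| := neg_le_abs _

namespace Complex

theorem one_add_ne_zero_of_norm_lt_one {w : ℂ} (hw : ‖w‖ < 1) : 1 + w ≠ 0 := by
  intro h
  rw [show w = -1 by linear_combination h, norm_neg, norm_one] at hw
  exact hw.false

theorem abs_arg_one_add_le {w : ℂ} (hw : ‖w‖ < 1) : |arg (1 + w)| ≤ ‖w‖ / (1 - ‖w‖) := by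
  have hre : 1 - ‖w‖ ≤ (1 + w).re := by
    simp only [add_re, one_re]
    linarith [neg_abs_le w.re, abs_re_le_norm w]
  have hpos : 0 < (1 + w).re := by linarith
  calc |arg (1 + w)| ≤ |Real.tan (arg (1 + w))| :=
        Real.abs_le_abs_tan (abs_arg_lt_pi_div_two_iff.2 (Or.inl hpos))
    _ = |w.im| / (1 + w).re := by
        rw [tan_arg, abs_div, abs_of_pos hpos, add_im, one_im, zero_add]
    _ ≤ ‖w‖ / (1 - ‖w‖) := div_le_div₀ (norm_nonneg w) (abs_im_le_norm w) (by linarith) hre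

theorem abs_toReal_coe_arg_add_sub_coe_arg_le {u c : ℂ} (h : ‖c‖ < ‖u‖) :
    |((arg (u + c) : Real.Angle) - arg u).toReal| ≤ ‖c‖ / (‖u‖ - ‖c‖) := by
  have hu_pos : 0 < ‖u‖ := (norm_nonneg c).trans_lt h
  have hu : u ≠ 0 := norm_pos_iff.1 hu_pos
  have hw : ‖c / u‖ < 1 := by rwa [norm_div, div_lt_one hu_pos]
  have hfactor : u + c = u * (1 + c / u) := by field_simp
  rw [hfactor, arg_mul_coe_angle hu (one_add_ne_zero_of_norm_lt_one hw), add_sub_cancel_left,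
    arg_coe_angle_toReal_eq_arg]
  calc |arg (1 + c / u)| ≤ ‖c / u‖ / (1 - ‖c / u‖) := abs_arg_one_add_le hw
    _ = ‖c‖ / (‖u‖ - ‖c‖) := by
        rw [norm_div]
        field_simp

theorem norm_one_sub_exp_ofReal_mul_I (α : ℝ) :
    ‖1 - exp (α * I)‖ = 2 * |Real.sin (α / 2)| := by
  rw [norm_sub_rev, mul_comm, norm_exp_I_mul_ofReal_sub_one, norm_mul, Real.norm_eq_abs,
    Real.norm_eq_abs, abs_two]

theorem coe_arg_exp_ofReal_mul_I (α : ℝ) : (arg (exp (α * I)) : Real.Angle) = α := by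
  have h := arg_cos_add_sin_mul_I_coe_angle (α : Real.Angle)
  rwa [Real.Angle.cos_coe, Real.Angle.sin_coe, ofReal_cos, ofReal_sin, ← exp_mul_I] at h

end Complex

theorem stmt_6_general (α : ℝ) (C : Fin 2 → ℂ) (P : Fin 2 → Set ℂ) (T : ℂ → ℂ)
    (hcover : P 0 ∪ P 1 = Set.univ)
    (hT : ∀ (j : Fin 2), ∀ z ∈ P j, T z = Complex.exp (α * Complex.I) * (z - C j) + C j)
    (N : ℝ) (hN : N = 2 * |Real.sin (α / 2)| * max ‖C 0‖ ‖C 1‖)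
    (z : ℂ) (hz : N < ‖z‖) :
    |Real.Angle.toReal ((Complex.arg (T z) : Real.Angle) -
        ((Complex.arg z + α : ℝ) : Real.Angle))| ≤ N / (‖z‖ - N) := by
  obtain ⟨j, hj⟩ : ∃ j, z ∈ P j := by
    rcases hcover.symm ▸ Set.mem_univ z with h | h
    exacts [⟨0, h⟩, ⟨1, h⟩]
  set E := exp (α * I)
  have hN_nonneg : 0 ≤ N := by rw [hN]; positivity
  have hz0 : z ≠ 0 := norm_pos_iff.1 (hN_nonneg.trans_lt hz)
  have hTz : T z = E * z + (1 - E) * C j := by rw [hT j z hj]; ring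
  have hc : ‖(1 - E) * C j‖ ≤ N := by
    rw [norm_mul, norm_one_sub_exp_ofReal_mul_I, hN]
    gcongr
    fin_cases j
    exacts [le_max_left _ _, le_max_right _ _]
  have hu : ‖E * z‖ = ‖z‖ := by rw [norm_mul, norm_exp_ofReal_mul_I, one_mul]
  have harg : ((arg z + α : ℝ) : Real.Angle) = arg (E * z) := by
    rw [arg_mul_coe_angle (exp_ne_zero _) hz0, coe_arg_exp_ofReal_mul_I, Real.Angle.coe_add,
      add_comm]
  rw [hTz, harg]
  calc _ ≤ ‖(1 - E) * C j‖ / (‖E * z‖ - ‖(1 - E) * C j‖) :=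
        abs_toReal_coe_arg_add_sub_coe_arg_le (by rw [hu]; linarith)
    _ ≤ N / (‖z‖ - N) := by
        rw [hu]
        exact div_le_div₀ hN_nonneg hc (by linarith) (by linarith)

theorem stmt_6 (α : ℝ) (C : Fin 2 → ℂ) (P : Fin 2 → Set ℂ) (T : ℂ → ℂ)
    (hdisj : Disjoint (P 0) (P 1)) (hcover : P 0 ∪ P 1 = Set.univ)
    (hT : ∀ (j : Fin 2), ∀ z ∈ P j, T z = Complex.exp (α * Complex.I) * (z - C j) + C j)
    (N : ℝ) (hN : N = 2 * |Real.sin (α / 2)| * max ‖C 0‖ ‖C 1‖)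
    (z : ℂ) (hz : N < ‖z‖) (hz0 : z ≠ 0) (hTz0 : T z ≠ 0) :
    |Real.Angle.toReal ((Complex.arg (T z) : Real.Angle) -
        ((Complex.arg z + α : ℝ) : Real.Angle))| ≤ N / (‖z‖ - N) :=
  stmt_6_general α C P T hcover hT N hN z hz
end

section
/- For all z ∈ ℂ with |z| > N (where N = 2|sin(α/2)| max(|C₀|,|C₁|)) and with T a piecewise rotation of angle α and centers C₀, C₁, one has |T(z)e^{−iα}/z − 1| ≤ N/|z|, and consequently Re(T(z)e^{−iα}/z) ≥ 1 − N/|z| and |Im(T(z)e^{−iα}/z)| ≤ N/|z|. -/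
/-!
Since `e^{-iα} (e^{iα}(z - c) + c) = z + (e^{-iα} - 1) c`, a rotation `R` of angle `α` about `c`
satisfies `R(z) e^{-iα} / z - 1 = (e^{-iα} - 1) c / z`, and `|e^{-iα} - 1| = 2 |sin (α/2)|`.
On each piece `T` is such a rotation, which bounds `|T(z) e^{-iα}/z - 1|` by `N/|z|`; the real
and imaginary parts of a point at distance at most `r` from `1` are then controlled by `r`.
-/

open Complex

lemma norm_exp_neg_ofReal_mul_I_sub_one (α : ℝ) :
    ‖exp (-(α : ℂ) * I) - 1‖ = 2 * |Real.sin (α / 2)| := by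
  have h := norm_exp_I_mul_ofReal_sub_one (-α)
  rw [show I * ((-α : ℝ) : ℂ) = -(α : ℂ) * I by push_cast; ring] at h
  rw [h, Real.norm_eq_abs, abs_mul, abs_two, neg_div, Real.sin_neg, abs_neg]

lemma rotation_mul_exp_neg_div_sub_one (α : ℝ) (c : ℂ) {z : ℂ} (hz : z ≠ 0) :
    (exp (α * I) * (z - c) + c) * exp (-(α : ℂ) * I) / z - 1
      = (exp (-(α : ℂ) * I) - 1) * c / z := by
  have hinv : exp (α * I) * exp (-(α : ℂ) * I) = 1 := by
    rw [← exp_add, ← add_mul, add_neg_cancel, zero_mul, exp_zero]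
  rw [div_sub_one hz, div_left_inj' hz]
  linear_combination (z - c) * hinv

lemma norm_rotation_mul_exp_neg_div_sub_one_le (α : ℝ) {c z : ℂ} (hz : z ≠ 0) {M : ℝ}
    (hc : ‖c‖ ≤ M) :
    ‖(exp (α * I) * (z - c) + c) * exp (-(α : ℂ) * I) / z - 1‖
      ≤ 2 * |Real.sin (α / 2)| * M / ‖z‖ := by
  rw [rotation_mul_exp_neg_div_sub_one α c hz, norm_div, norm_mul,
    norm_exp_neg_ofReal_mul_I_sub_one]
  gcongr

lemma Complex.one_sub_le_re_of_norm_sub_one_le {w : ℂ} {r : ℝ} (h : ‖w - 1‖ ≤ r) :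
    1 - r ≤ w.re := by
  have := (abs_le.mp ((abs_re_le_norm (w - 1)).trans h)).1
  rw [sub_re, one_re] at this
  linarith

lemma Complex.abs_im_le_of_norm_sub_one_le {w : ℂ} {r : ℝ} (h : ‖w - 1‖ ≤ r) :
    |w.im| ≤ r := by
  simpa using (abs_im_le_norm (w - 1)).trans h

theorem stmt_7_general (α : ℝ) (C : Fin 2 → ℂ) (P : Fin 2 → Set ℂ) (T : ℂ → ℂ)
    (hcover : P 0 ∪ P 1 = Set.univ)
    (hT : ∀ (j : Fin 2), ∀ z ∈ P j, T z = Complex.exp (α * Complex.I) * (z - C j) + C j)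
    (N : ℝ) (hN : N = 2 * |Real.sin (α / 2)| * max ‖C 0‖ ‖C 1‖)
    (z : ℂ) (hz : N < ‖z‖) :
    ‖T z * Complex.exp (-(α : ℂ) * Complex.I) / z - 1‖ ≤ N / ‖z‖ ∧
    1 - N / ‖z‖ ≤ (T z * Complex.exp (-(α : ℂ) * Complex.I) / z).re ∧
    |(T z * Complex.exp (-(α : ℂ) * Complex.I) / z).im| ≤ N / ‖z‖ := by
  have hz0 : z ≠ 0 := norm_pos_iff.mp ((by rw [hN]; positivity : 0 ≤ N).trans_lt hz)
  obtain ⟨j, hj, hCj⟩ : ∃ j, z ∈ P j ∧ ‖C j‖ ≤ max ‖C 0‖ ‖C 1‖ := by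
    rcases (hcover ▸ Set.mem_univ z : z ∈ P 0 ∪ P 1) with h | h
    exacts [⟨0, h, le_max_left _ _⟩, ⟨1, h, le_max_right _ _⟩]
  have hbound : ‖T z * exp (-(α : ℂ) * I) / z - 1‖ ≤ N / ‖z‖ := by
    rw [hT j z hj, hN]
    exact norm_rotation_mul_exp_neg_div_sub_one_le α hz0 hCj
  exact ⟨hbound, one_sub_le_re_of_norm_sub_one_le hbound, abs_im_le_of_norm_sub_one_le hbound⟩

theorem stmt_7 (α : ℝ) (C : Fin 2 → ℂ) (P : Fin 2 → Set ℂ) (T : ℂ → ℂ)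
    (hdisj : Disjoint (P 0) (P 1)) (hcover : P 0 ∪ P 1 = Set.univ)
    (hT : ∀ (j : Fin 2), ∀ z ∈ P j, T z = Complex.exp (α * Complex.I) * (z - C j) + C j)
    (N : ℝ) (hN : N = 2 * |Real.sin (α / 2)| * max ‖C 0‖ ‖C 1‖)
    (z : ℂ) (hz : N < ‖z‖) :
    ‖T z * Complex.exp (-(α : ℂ) * Complex.I) / z - 1‖ ≤ N / ‖z‖ ∧
    1 - N / ‖z‖ ≤ (T z * Complex.exp (-(α : ℂ) * Complex.I) / z).re ∧
    |(T z * Complex.exp (-(α : ℂ) * Complex.I) / z).im| ≤ N / ‖z‖ :=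
  stmt_7_general α C P T hcover hT N hN z hz
end

section
/- For the piecewise rotation T with line of discontinuity D parametrized by z₀ and angle γ, rotation angle α, and centers C₀, C₁: for every z ∈ D, the scalar product ⟨r₁(z − ie^{iγ}) − r₁(z), r₀(z) − r₁(z)⟩ equals Δ = −2|C₁ − C₀| sin(α/2) cos(γ + α/2 − β), where β = arg(C₁ − C₀) and r_j(w) = e^{iα}(w − C_j) + C_j. In particular this value is independent of z ∈ D. -/
/-- Scalar product of two complex numbers, `⟨u, v⟩ = Re (u * conj v)`. -/
noncomputable def scal (u v : ℂ) : ℝ := (u * (starRingEnd ℂ) v).re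

/-!
Both vectors are differences of images under the rotations `r j`, so they factor through the
rotation: the first is `e^{iα}` times `-i e^{iγ}`, the second is `(e^{iα} - 1)(C₁ - C₀)`, with
no dependence on the point of `D`. In polar form these are `e^{i(α + γ - π/2)}` and
`2 |C₁ - C₀| sin(α/2) e^{i(β + α/2 + π/2)}`, and the scalar product of two polar vectors is the
product of their moduli times the cosine of the angle between them.
-/

open Complex
open scoped Real

theorem scal_exp_mul_I (θ b φ : ℝ) :
    scal (exp (θ * I)) (b * exp (φ * I)) = b * Real.cos (θ - φ) := by
  have hconj : (starRingEnd ℂ) (b * exp (φ * I)) = b * exp (-φ * I) := by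
    rw [map_mul, ← exp_conj, map_mul, conj_ofReal, conj_ofReal, conj_I]; ring_nf
  have hprod : exp (θ * I) * (b * exp (-φ * I)) = b * exp (↑(θ - φ) * I) := by
    rw [mul_left_comm, ← exp_add]; push_cast; ring_nf
  rw [scal, hconj, hprod, re_ofReal_mul, exp_ofReal_mul_I_re]

theorem neg_I_mul_exp_mul_I (θ : ℝ) : -I * exp (θ * I) = exp (↑(θ - π / 2) * I) := by
  push_cast
  rw [sub_mul, sub_eq_add_neg, exp_add, ← neg_mul, ← neg_div, exp_neg_pi_div_two_mul_I]
  ring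

theorem exp_mul_I_sub_one (α : ℝ) :
    exp (α * I) - 1 = ↑(2 * Real.sin (α / 2)) * exp (↑(α / 2 + π / 2) * I) := by
  set e := exp (α / 2 * I)
  have hsq : e * e = exp (α * I) := by
    rw [← exp_add]; ring_nf
  have hinv : exp (-(α / 2) * I) * e = 1 := by
    rw [← exp_add]; ring_nf; exact exp_zero
  push_cast
  rw [add_mul, exp_add, exp_pi_div_two_mul_I, two_sin]
  linear_combination (e * e - exp (-(α / 2) * I) * e) * I_sq - hsq + hinv

theorem stmt_11_general (α γ β Δ : ℝ) (z₀ : ℂ) (C : Fin 2 → ℂ)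
    (r : Fin 2 → ℂ → ℂ)
    (hr : ∀ j w, r j w = Complex.exp (α * Complex.I) * (w - C j) + C j)
    (hβ : β = Complex.arg (C 1 - C 0))
    (hΔ : Δ = -2 * ‖C 1 - C 0‖ * Real.sin (α / 2) * Real.cos (γ + α / 2 - β)) :
    ∀ t : ℝ,
      scal (r 1 ((z₀ + t * Complex.exp (γ * Complex.I)) - Complex.I * Complex.exp (γ * Complex.I))
              - r 1 (z₀ + t * Complex.exp (γ * Complex.I)))
           (r 0 (z₀ + t * Complex.exp (γ * Complex.I))
              - r 1 (z₀ + t * Complex.exp (γ * Complex.I))) = Δ := by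
  intro t
  set z := z₀ + t * exp (γ * I)
  have hu : r 1 (z - I * exp (γ * I)) - r 1 z = exp (↑(α + γ - π / 2) * I) :=
    calc r 1 (z - I * exp (γ * I)) - r 1 z = exp (α * I) * (-I * exp (γ * I)) := by
          rw [hr, hr]; ring
      _ = exp (↑(α + γ - π / 2) * I) := by
          rw [neg_I_mul_exp_mul_I, ← exp_add]; push_cast; ring_nf
  have hv : r 0 z - r 1 z
      = ↑(2 * Real.sin (α / 2) * ‖C 1 - C 0‖) * exp (↑(α / 2 + π / 2 + β) * I) :=
    calc r 0 z - r 1 z = (exp (α * I) - 1) * (C 1 - C 0) := by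
          rw [hr, hr]; ring
      _ = ↑(2 * Real.sin (α / 2)) * exp (↑(α / 2 + π / 2) * I)
            * (‖C 1 - C 0‖ * exp (arg (C 1 - C 0) * I)) := by
          rw [exp_mul_I_sub_one, norm_mul_exp_arg_mul_I]
      _ = ↑(2 * Real.sin (α / 2) * ‖C 1 - C 0‖) * exp (↑(α / 2 + π / 2 + β) * I) := by
          rw [hβ, mul_mul_mul_comm, ← exp_add]; push_cast; ring_nf
  rw [hu, hv, scal_exp_mul_I, hΔ,
    show α + γ - π / 2 - (α / 2 + π / 2 + β) = γ + α / 2 - β - π by ring, Real.cos_sub_pi]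
  ring

theorem stmt_11 (α γ β Δ : ℝ) (z₀ : ℂ) (C : Fin 2 → ℂ) (hC : C 0 ≠ C 1)
    (r : Fin 2 → ℂ → ℂ)
    (hr : ∀ j w, r j w = Complex.exp (α * Complex.I) * (w - C j) + C j)
    (hβ : β = Complex.arg (C 1 - C 0))
    (hΔ : Δ = -2 * ‖C 1 - C 0‖ * Real.sin (α / 2) * Real.cos (γ + α / 2 - β)) :
    ∀ t : ℝ,
      scal (r 1 ((z₀ + t * Complex.exp (γ * Complex.I)) - Complex.I * Complex.exp (γ * Complex.I))
              - r 1 (z₀ + t * Complex.exp (γ * Complex.I)))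
           (r 0 (z₀ + t * Complex.exp (γ * Complex.I))
              - r 1 (z₀ + t * Complex.exp (γ * Complex.I))) = Δ :=
  stmt_11_general α γ β Δ z₀ C r hr hβ hΔ
end

section
/- Let q > 2 be an even integer, p coprime to q, and k ∈ {0,…,q−1}. Define η(m) = 0 if (m mod q) < q/2 and η(m) = 1 otherwise, and let α = 2πp/q. Then Σ_{n=0}^{q−1} C_{η(k+np)} e^{−iα(n+1)} = e^{2πi(k−p)/q} (C₀ − C₁) · 2/(1 − e^{−2πi/q}) for any C₀, C₁ ∈ ℂ. -/
/-!
Put `ω = exp (-2πi/q)`, a primitive `q`-th root of unity. The `n`-th term equals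
`ω ^ (p - k) * (C (η m) * ω ^ m)` with `m = k + n p`. The bracket is `q`-periodic in `m`, and
`n ↦ k + n p` permutes the residues mod `q` because `p` is a unit mod `q`, so the sum is
`ω ^ (p - k) * ∑_{m < q} C (η m) ω ^ m`. As `ω ^ (q/2) = -1`, the second half of the last sum is
`-C 1` times the geometric sum `∑_{m < q/2} ω ^ m = 2 / (1 - ω)`, while the first half is `C 0`
times it.
-/

/-- `η m = 0` if `m mod q < q/2`, and `η m = 1` otherwise. -/
def eta (q : ℕ) (m : ℕ) : Fin 2 := if m % q < q / 2 then 0 else 1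

open Finset Function

theorem Function.Periodic.sum_range_add_mul {M : Type*} [AddCommMonoid M] {f : ℕ → M} {q : ℕ}
    (hf : Periodic f q) {p : ℕ} (hpq : p.Coprime q) (k : ℕ) :
    ∑ n ∈ range q, f (k + n * p) = ∑ m ∈ range q, f m := by
  have hmaps : Set.MapsTo (fun n => (k + n * p) % q) (range q) (range q) := fun n hn =>
    mem_range.2 (Nat.mod_lt _ (pos_of_ne_zero (ne_zero_of_lt (mem_range.1 hn))))
  have hinj : Set.InjOn (fun n => (k + n * p) % q) (range q) := fun a ha b hb hab =>
    Nat.ModEq.eq_of_lt_of_lt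
      ((Nat.ModEq.add_left_cancel' k hab).cancel_right_of_coprime hpq.symm)
      (mem_range.1 ha) (mem_range.1 hb)
  calc ∑ n ∈ range q, f (k + n * p) = ∑ n ∈ range q, f ((k + n * p) % q) :=
        sum_congr rfl fun n _ => (hf.map_mod_nat _).symm
    _ = ∑ m ∈ range q, f m :=
        sum_nbij _ hmaps hinj (surjOn_of_injOn_of_card_le _ hmaps hinj le_rfl) fun _ _ => rfl

theorem IsPrimitiveRoot.pow_eq_neg_one_of_two_mul {R : Type*} [CommRing R] [IsDomain R] {ζ : R}
    {t : ℕ} (hζ : IsPrimitiveRoot ζ (2 * t)) (ht : t ≠ 0) : ζ ^ t = -1 := by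
  have h := hζ.pow_of_dvd ht (dvd_mul_left t 2)
  rw [Nat.mul_div_cancel _ (Nat.pos_of_ne_zero ht)] at h
  exact h.eq_neg_one_of_two_right

theorem sum_range_two_mul_ite_mul_pow {K : Type*} [Field K] {ζ : K} {t : ℕ} (hζt : ζ ^ t = -1)
    (hζ : ζ ≠ 1) (a b : K) :
    ∑ m ∈ range (2 * t), (if m < t then a else b) * ζ ^ m = 2 * (a - b) / (1 - ζ) := by
  have hgeom : (∑ m ∈ range t, ζ ^ m) * (1 - ζ) = 2 := by
    rw [geom_sum_mul_neg, hζt]; ring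
  have hfirst :
      ∑ m ∈ range t, (if m < t then a else b) * ζ ^ m = a * ∑ m ∈ range t, ζ ^ m := by
    rw [mul_sum]; exact sum_congr rfl fun m hm => by rw [if_pos (mem_range.1 hm)]
  have hsecond : ∑ m ∈ range t, (if t + m < t then a else b) * ζ ^ (t + m)
      = -b * ∑ m ∈ range t, ζ ^ m := by
    rw [mul_sum]; exact sum_congr rfl fun m _ => by rw [if_neg (by omega), pow_add, hζt]; ring
  rw [two_mul, sum_range_add, hfirst, hsecond, eq_div_iff (sub_ne_zero.2 hζ.symm)]
  linear_combination (a - b) * hgeom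

theorem sum_range_eta_mul_pow {K : Type*} [Field K] {t : ℕ} {ζ : K} (hζt : ζ ^ t = -1)
    (hζ : ζ ≠ 1) (C : Fin 2 → K) :
    ∑ m ∈ range (2 * t), C (eta (2 * t) m) * ζ ^ m = 2 * (C 0 - C 1) / (1 - ζ) := by
  rw [← sum_range_two_mul_ite_mul_pow hζt hζ]
  refine sum_congr rfl fun m hm => ?_
  rw [eta, Nat.mod_eq_of_lt (mem_range.1 hm), Nat.mul_div_cancel_left _ two_pos]
  split_ifs <;> rfl

theorem stmt_12_general (q p k : ℕ) (hq2 : 2 < q) (hqeven : Even q) (hpq : Nat.Coprime p q)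
    (α : ℝ) (hα : α = 2 * Real.pi * p / q) (C : Fin 2 → ℂ) :
    (∑ n ∈ Finset.range q,
        C (eta q (k + n * p)) * Complex.exp (-(α : ℂ) * (n + 1) * Complex.I)) =
      Complex.exp ((2 * Real.pi * ((k : ℝ) - p) / q) * Complex.I) * (C 0 - C 1) *
        (2 / (1 - Complex.exp (-(2 * Real.pi / q) * Complex.I))) := by
  obtain ⟨t, rfl⟩ := hqeven
  rw [← two_mul] at hq2 hpq hα ⊢
  set ω := Complex.exp (-(2 * Real.pi / ↑(2 * t)) * Complex.I)
  have hω : IsPrimitiveRoot ω (2 * t) := by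
    have h := (Complex.isPrimitiveRoot_exp (2 * t) (by omega)).inv
    rwa [← Complex.exp_neg, mul_div_right_comm, ← neg_mul] at h
  have hexp_α (n : ℕ) :
      Complex.exp (-(α : ℂ) * (n + 1) * Complex.I) = ω ^ (p * (n + 1)) := by
    rw [← Complex.exp_nat_mul, hα]; congr 1; push_cast; field_simp
  have hexp_kp : Complex.exp ((2 * Real.pi * ((k : ℝ) - p) / ↑(2 * t)) * Complex.I) =
      ω ^ ((p : ℤ) - k) := by
    rw [← Complex.exp_int_mul]; congr 1; push_cast; field_simp; ring
  have hperiodic : Periodic (fun m => C (eta (2 * t) m) * ω ^ m) (2 * t) := fun m => by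
    simp only [eta, Nat.add_mod_right, pow_add, hω.pow_eq_one, mul_one]
  calc _ = ∑ n ∈ range (2 * t),
        ω ^ ((p : ℤ) - k) * (C (eta (2 * t) (k + n * p)) * ω ^ (k + n * p)) :=
        sum_congr rfl fun n _ => by
          rw [hexp_α, mul_left_comm, ← zpow_natCast ω (k + n * p),
            ← zpow_add₀ (Complex.exp_ne_zero _), ← zpow_natCast]
          congr 2; push_cast; ring
    _ = ω ^ ((p : ℤ) - k) * ∑ m ∈ range (2 * t), C (eta (2 * t) m) * ω ^ m := by
        rw [← mul_sum, hperiodic.sum_range_add_mul hpq k]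
    _ = _ := by
        rw [sum_range_eta_mul_pow (hω.pow_eq_neg_one_of_two_mul (by omega))
          (hω.ne_one (by omega)), hexp_kp]
        ring

theorem stmt_12 (q p k : ℕ) (hq2 : 2 < q) (hqeven : Even q) (hpq : Nat.Coprime p q)
    (hk : k < q) (α : ℝ) (hα : α = 2 * Real.pi * p / q) (C : Fin 2 → ℂ) :
    (∑ n ∈ Finset.range q,
        C (eta q (k + n * p)) * Complex.exp (-(α : ℂ) * (n + 1) * Complex.I)) =
      Complex.exp ((2 * Real.pi * ((k : ℝ) - p) / q) * Complex.I) * (C 0 - C 1) *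
        (2 / (1 - Complex.exp (-(2 * Real.pi / q) * Complex.I))) :=
  stmt_12_general q p k hq2 hqeven hpq α hα C
end
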